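/- Let m ≥ 1, let d ≥ 4 be even, set α = (d−2)/2, and let C : [0,π] → ℝ^{m×m} be a symmetric-matrix-valued function with continuous entries. If H_n^{(α,0)}(C) is positive semidefinite for every n ∈ ℕ₀ and Σ_{n=1}^∞ n^{α+1} H_n^{(α,0)}(C) converges entrywise, then: (a) H_n^{(α,α)}(C) is positive semidefinite for every n ∈ ℕ₀ and Σ_{n=1}^∞ n^{α+1} H_n^{(α,α)}(C) converges entrywise; (b) if moreover d ∈ {8,12,16,...}, then H_n^{(α,1)}(C) is positive semidefinite for every n ∈ ℕ₀ and Σ_{n=1}^∞ n^{α+1} H_n^{(α,1)}(C) converges entrywise. (By Theorem 1 this says: an isotropic covariance matrix function on the complex projective space P^d(ℂ) is one on the sphere S^d, and, for d ∈ {8,12,...}, one on the quaternionic projective space P^d(ℍ).) -/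

import Mathlib

/-!
The Jacobi weights of `(α, β + 1)` and `(α, β)` differ by the factor `cos² (θ/2) = (1 + cos θ)/2`,
and the contiguous relation
`(2n + α + β + 2) · (1 + x)/2 · P_n^{(α,β+1)}(x)`
  `= (n + β + 1) P_n^{(α,β)}(x) + (n + 1) P_{n+1}^{(α,β)}(x)`
writes `H_n^{(α,β+1)}(C)` as a combination of `H_n^{(α,β)}(C)` and `H_{n+1}^{(α,β)}(C)` with
nonnegative coefficients at most `2n + α + β + 2`. Hence positive semidefiniteness and absolute
convergence of `Σ n^{α+1} H_n` pass from `β` to `β + 1`; for symmetric positive semidefinite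
matrices `|A i j| ≤ (A i i + A j j)/2`, so the convergence assumed at `β = 0` is absolute.
One step reaches `β = 1`, and `α = d/2 - 1` steps reach `β = α`.
-/

open Filter Matrix

/-- Jacobi polynomial `P_n^{(α,β)}(x)`. -/
noncomputable def jacobiP (α β : ℝ) (n : ℕ) (x : ℝ) : ℝ :=
  (1 / (n.factorial : ℝ)) * ∑ k ∈ Finset.range (n + 1),
    (n.choose k : ℝ) * (∏ i ∈ Finset.Icc (k + 1) n, (α + (i : ℝ))) *
      (∏ j ∈ Finset.Icc 1 k, (α + β + (n : ℝ) + (j : ℝ))) * ((x - 1) / 2) ^ k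

/-- The matrix `H_n^{(α,β)}(C)`. -/
noncomputable def Hmat {m : ℕ} (α β : ℝ) (C : ℝ → Matrix (Fin m) (Fin m) ℝ) (n : ℕ) :
    Matrix (Fin m) (Fin m) ℝ :=
  Matrix.of fun i j => ∫ θ in (0:ℝ)..Real.pi,
    C θ i j * jacobiP α β n (Real.cos θ) *
      (Real.sin (θ / 2)) ^ (2 * α + 1) * (Real.cos (θ / 2)) ^ (2 * β + 1)

def PSD {m : ℕ} (A : Matrix (Fin m) (Fin m) ℝ) : Prop :=
  ∀ v : Fin m → ℝ, 0 ≤ v ⬝ᵥ A.mulVec v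

def SeriesTo (f : ℕ → ℝ) (L : ℝ) : Prop :=
  Filter.Tendsto (fun N => ∑ n ∈ Finset.range N, f n) Filter.atTop (nhds L)

def SeriesConv (f : ℕ → ℝ) : Prop := ∃ L, SeriesTo f L

open Finset

lemma prod_Icc_one_add_succ {R : Type*} [CommSemiring R] (c : R) (k : ℕ) :
    ∏ j ∈ Icc 1 (k + 1), (c + j) = (c + 1) * ∏ j ∈ Icc 1 k, (c + 1 + j) := by
  induction k with
  | zero => simp
  | succ k ih =>
    rw [prod_Icc_succ_top (by omega), ih, prod_Icc_succ_top (by omega)]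
    push_cast; ring

lemma prod_Icc_eq_mul_prod_Icc_add_one {M : Type*} [CommMonoid M] (f : ℕ → M) {a b : ℕ}
    (h : a ≤ b) :
    ∏ i ∈ Icc a b, f i = f a * ∏ i ∈ Icc (a + 1) b, f i := by
  rw [← insert_Icc_add_one_left_eq_Icc h, prod_insert (by simp)]

lemma one_add_mul_sum_range_succ {R : Type*} [CommSemiring R] (a : ℕ → R) (t : R) (n : ℕ) :
    (1 + t) * ∑ k ∈ range (n + 1), a k * t ^ k
      = a 0 + ∑ k ∈ range n, (a k + a (k + 1)) * t ^ (k + 1) + a n * t ^ (n + 1) := by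
  have hshift : t * ∑ k ∈ range (n + 1), a k * t ^ k
      = ∑ k ∈ range n, a k * t ^ (k + 1) + a n * t ^ (n + 1) := by
    rw [mul_sum, sum_range_succ]
    simp only [pow_succ]
    ring_nf
  simp only [add_mul, one_mul, hshift, sum_add_distrib]
  rw [sum_range_succ' _ n]
  ring

noncomputable def jacobiCoeff (α β : ℝ) (n k : ℕ) : ℝ :=
  n.choose k * (∏ i ∈ Icc (k + 1) n, (α + i)) * ∏ j ∈ Icc 1 k, (α + β + n + j)

lemma jacobiP_eq_sum (α β : ℝ) (n : ℕ) (x : ℝ) :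
    jacobiP α β n x
      = 1 / n.factorial * ∑ k ∈ range (n + 1), jacobiCoeff α β n k * ((x - 1) / 2) ^ k :=
  rfl

section JacobiCoeff

variable (α β : ℝ) (n : ℕ)

lemma jacobiCoeff_succ_beta_zero :
    (2 * n + α + β + 2) * jacobiCoeff α (β + 1) n 0
      = (n + β + 1) * jacobiCoeff α β n 0 + jacobiCoeff α β (n + 1) 0 := by
  simp only [jacobiCoeff, Nat.choose_zero_right, zero_add, Icc_eq_empty_of_lt zero_lt_one,
    prod_empty]
  rw [prod_Icc_succ_top (by omega)]
  push_cast
  ring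

lemma jacobiCoeff_succ_beta_top :
    (2 * n + α + β + 2) * jacobiCoeff α (β + 1) n n = jacobiCoeff α β (n + 1) (n + 1) := by
  have hQ : ∏ j ∈ Icc 1 n, (α + β + (n + 1 : ℕ) + j) = ∏ j ∈ Icc 1 n, (α + (β + 1) + n + j) :=
    prod_congr rfl fun j _ => by push_cast; ring
  simp only [jacobiCoeff, Nat.choose_self, Icc_eq_empty_of_lt (Nat.lt_succ_self _), prod_empty]
  rw [prod_Icc_succ_top (by omega), hQ]
  push_cast
  ring

lemma jacobiCoeff_succ_beta_succ {k : ℕ} (hk : k < n) :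
    (2 * n + α + β + 2) * (jacobiCoeff α (β + 1) n k + jacobiCoeff α (β + 1) n (k + 1))
      = (n + β + 1) * jacobiCoeff α β n (k + 1) + jacobiCoeff α β (n + 1) (k + 1) := by
  have hchoose : ((k : ℝ) + 1) * n.choose (k + 1) = (n - k) * n.choose k := by
    have := congrArg (Nat.cast (R := ℝ)) (Nat.choose_succ_right_eq n k)
    push_cast [Nat.cast_sub hk.le] at this
    linarith
  set P := ∏ i ∈ Icc (k + 2) n, (α + i)
  set Q := ∏ j ∈ Icc 1 k, (α + β + n + 1 + j)
  have hP : ∏ i ∈ Icc (k + 1) n, (α + i) = (α + (k + 1 : ℕ)) * P :=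
    prod_Icc_eq_mul_prod_Icc_add_one _ (by omega)
  have hP' : ∏ i ∈ Icc (k + 2) (n + 1), (α + i) = P * (α + (n + 1 : ℕ)) :=
    prod_Icc_succ_top (by omega) _
  have hQ : ∏ j ∈ Icc 1 k, (α + (β + 1) + n + j) = Q :=
    prod_congr rfl fun j _ => by ring
  have hQ' : ∏ j ∈ Icc 1 (k + 1), (α + (β + 1) + n + j) = Q * (α + β + n + 1 + (k + 1 : ℕ)) := by
    rw [prod_Icc_succ_top (by omega), hQ]; ring
  have hQf : ∏ j ∈ Icc 1 (k + 1), (α + β + n + j) = (α + β + n + 1) * Q :=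
    prod_Icc_one_add_succ _ k
  have hQh :
      ∏ j ∈ Icc 1 (k + 1), (α + β + (n + 1 : ℕ) + j) = Q * (α + β + n + 1 + (k + 1 : ℕ)) := by
    have hQ₀ : ∏ j ∈ Icc 1 k, (α + β + (n + 1 : ℕ) + j) = Q :=
      prod_congr rfl fun j _ => by push_cast; ring
    rw [prod_Icc_succ_top (by omega), hQ₀]
    push_cast; ring
  simp only [jacobiCoeff, hP, hP', hQ, hQ', hQf, hQh, Nat.choose_succ_succ]
  push_cast
  linear_combination (β + n + 1) * P * Q * hchoose

end JacobiCoeff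

lemma sum_jacobiCoeff_succ_beta (α β : ℝ) (n : ℕ) (t : ℝ) :
    (2 * n + α + β + 2) * ((1 + t) * ∑ k ∈ range (n + 1), jacobiCoeff α (β + 1) n k * t ^ k)
      = (n + β + 1) * ∑ k ∈ range (n + 1), jacobiCoeff α β n k * t ^ k
        + ∑ k ∈ range (n + 1 + 1), jacobiCoeff α β (n + 1) k * t ^ k := by
  set g := jacobiCoeff α (β + 1) n
  set f := jacobiCoeff α β n
  set h := jacobiCoeff α β (n + 1)
  have hF : ∑ k ∈ range (n + 1), f k * t ^ k = f 0 + ∑ k ∈ range n, f (k + 1) * t ^ (k + 1) := by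
    rw [sum_range_succ', pow_zero, mul_one, add_comm]
  have hH : ∑ k ∈ range (n + 1 + 1), h k * t ^ k
      = h 0 + ∑ k ∈ range n, h (k + 1) * t ^ (k + 1) + h (n + 1) * t ^ (n + 1) := by
    rw [sum_range_succ, sum_range_succ', pow_zero, mul_one, add_comm (∑ k ∈ range n, _)]
  have hmid : (2 * n + α + β + 2) * ∑ k ∈ range n, (g k + g (k + 1)) * t ^ (k + 1)
      = (n + β + 1) * ∑ k ∈ range n, f (k + 1) * t ^ (k + 1)
        + ∑ k ∈ range n, h (k + 1) * t ^ (k + 1) := by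
    rw [mul_sum, mul_sum, ← sum_add_distrib]
    refine sum_congr rfl fun k hk => ?_
    rw [← mul_assoc, jacobiCoeff_succ_beta_succ α β n (mem_range.1 hk)]
    ring
  rw [one_add_mul_sum_range_succ, hF, hH]
  linear_combination hmid + jacobiCoeff_succ_beta_zero α β n
    + t ^ (n + 1) * jacobiCoeff_succ_beta_top α β n

lemma jacobiP_succ_beta (α β : ℝ) (n : ℕ) (x : ℝ) :
    (2 * n + α + β + 2) * ((1 + x) / 2) * jacobiP α (β + 1) n x
      = (n + β + 1) * jacobiP α β n x + (n + 1) * jacobiP α β (n + 1) x := by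
  have hfact : (n + 1 : ℝ) * (1 / (n + 1).factorial) = 1 / n.factorial := by
    rw [Nat.factorial_succ]
    push_cast
    field_simp
  simp only [jacobiP_eq_sum, show (1 + x) / 2 = 1 + (x - 1) / 2 by ring]
  linear_combination (1 / n.factorial : ℝ) * sum_jacobiCoeff_succ_beta α β n ((x - 1) / 2)
    - (∑ k ∈ range (n + 1 + 1), jacobiCoeff α β (n + 1) k * ((x - 1) / 2) ^ k) * hfact

lemma continuous_jacobiP (α β : ℝ) (n : ℕ) : Continuous (jacobiP α β n) := by
  unfold jacobiP
  fun_prop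

lemma intervalIntegrable_Hmat_integrand (α β : ℝ) (hα : 0 ≤ 2 * α + 1) (hβ : 0 ≤ 2 * β + 1)
    {c : ℝ → ℝ} (hc : ContinuousOn c (Set.Icc 0 Real.pi)) (n : ℕ) :
    IntervalIntegrable (fun θ => c θ * jacobiP α β n (Real.cos θ) *
      Real.sin (θ / 2) ^ (2 * α + 1) * Real.cos (θ / 2) ^ (2 * β + 1)) MeasureTheory.volume
      0 Real.pi := by
  refine ContinuousOn.intervalIntegrable ?_
  rw [Set.uIcc_of_le Real.pi_pos.le]
  refine ((hc.mul ?_).mul ?_).mul ?_ <;> refine Continuous.continuousOn ?_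
  · exact (continuous_jacobiP α β n).comp Real.continuous_cos
  · exact (by fun_prop : Continuous fun θ => Real.sin (θ / 2)).rpow_const fun _ => Or.inr hα
  · exact (by fun_prop : Continuous fun θ => Real.cos (θ / 2)).rpow_const fun _ => Or.inr hβ

lemma Hmat_succ_beta {m : ℕ} (α β : ℝ) (hα : 0 ≤ 2 * α + 1) (hβ : 0 ≤ 2 * β + 1)
    (C : ℝ → Matrix (Fin m) (Fin m) ℝ)
    (hcont : ∀ i j, ContinuousOn (fun θ => C θ i j) (Set.Icc 0 Real.pi)) (n : ℕ) :
    (2 * n + α + β + 2 : ℝ) • Hmat α (β + 1) C n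
      = (n + β + 1 : ℝ) • Hmat α β C n + (n + 1 : ℝ) • Hmat α β C (n + 1) := by
  ext i j
  have h₀ := intervalIntegrable_Hmat_integrand α β hα hβ (hcont i j) n
  have h₁ := intervalIntegrable_Hmat_integrand α β hα hβ (hcont i j) (n + 1)
  simp only [Hmat, Matrix.smul_apply, Matrix.add_apply, Matrix.of_apply, smul_eq_mul]
  rw [← intervalIntegral.integral_const_mul, ← intervalIntegral.integral_const_mul,
    ← intervalIntegral.integral_const_mul,
    ← intervalIntegral.integral_add (h₀.const_mul _) (h₁.const_mul _)]
  refine intervalIntegral.integral_congr fun θ hθ => ?_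
  rw [Set.uIcc_of_le Real.pi_pos.le] at hθ
  have hcos : 0 ≤ Real.cos (θ / 2) :=
    Real.cos_nonneg_of_mem_Icc ⟨by linarith [Real.pi_pos, hθ.1], by linarith [hθ.2]⟩
  have hweight : Real.cos (θ / 2) ^ (2 * (β + 1) + 1)
      = Real.cos (θ / 2) ^ (2 * β + 1) * ((1 + Real.cos θ) / 2) := by
    rw [show 2 * (β + 1) + 1 = (2 * β + 1) + (2 : ℕ) by push_cast; ring,
      Real.rpow_add' hcos (by push_cast; linarith), Real.rpow_natCast, Real.cos_sq,
      mul_div_cancel₀ θ two_ne_zero]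
    ring
  simp only [hweight]
  linear_combination (C θ i j * Real.sin (θ / 2) ^ (2 * α + 1) * Real.cos (θ / 2) ^ (2 * β + 1)) *
    jacobiP_succ_beta α β n (Real.cos θ)

lemma Hmat_transpose {m : ℕ} (α β : ℝ) {C : ℝ → Matrix (Fin m) (Fin m) ℝ}
    (hsym : ∀ θ ∈ Set.Icc (0 : ℝ) Real.pi, (C θ)ᵀ = C θ) (n : ℕ) :
    (Hmat α β C n)ᵀ = Hmat α β C n := by
  ext i j
  refine intervalIntegral.integral_congr fun θ hθ => ?_
  rw [Set.uIcc_of_le Real.pi_pos.le] at hθ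
  simp only [← transpose_apply (C θ) j i, hsym θ hθ]

section PSD

variable {m : ℕ}

lemma dotProduct_mulVec_single_add_single (A : Matrix (Fin m) (Fin m) ℝ) (i j : Fin m) (c : ℝ) :
    (Pi.single i 1 + Pi.single j c) ⬝ᵥ A *ᵥ (Pi.single i 1 + Pi.single j c)
      = A i i + c * A i j + c * A j i + c * c * A j j := by
  simp only [mulVec_add, dotProduct_add, add_dotProduct, mulVec_single, single_dotProduct,
    Pi.smul_apply, col_apply, MulOpposite.smul_eq_mul_unop, MulOpposite.unop_op,
    MulOpposite.op_one, one_smul, one_mul]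
  ring

lemma PSD.diag_nonneg {A : Matrix (Fin m) (Fin m) ℝ} (hA : PSD A) (i : Fin m) : 0 ≤ A i i := by
  have h := hA (Pi.single i 1 + Pi.single i 0)
  rw [dotProduct_mulVec_single_add_single] at h
  simpa using h

lemma PSD.abs_apply_le {A : Matrix (Fin m) (Fin m) ℝ} (hA : PSD A) (hAt : Aᵀ = A) (i j : Fin m) :
    |A i j| ≤ (A i i + A j j) / 2 := by
  have hji : A j i = A i j := by rw [← transpose_apply A i j, hAt]
  have hsum := hA (Pi.single i 1 + Pi.single j 1)
  have hdiff := hA (Pi.single i 1 + Pi.single j (-1))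
  rw [dotProduct_mulVec_single_add_single, hji] at hsum hdiff
  rw [abs_le]
  constructor <;> linarith

lemma PSD.of_smul_eq_add {A B X : Matrix (Fin m) (Fin m) ℝ} {a b c : ℝ} (hc : 0 < c)
    (ha : 0 ≤ a) (hb : 0 ≤ b) (hA : PSD A) (hB : PSD B) (hX : c • X = a • A + b • B) :
    PSD X := fun v => by
  have hq := congrArg (fun M : Matrix (Fin m) (Fin m) ℝ => v ⬝ᵥ M *ᵥ v) hX
  simp only [smul_mulVec, add_mulVec, dotProduct_add, dotProduct_smul, smul_eq_mul] at hq
  exact nonneg_of_mul_nonneg_right (hq ▸ add_nonneg (mul_nonneg ha (hA v)) (mul_nonneg hb (hB v)))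
    hc

end PSD

lemma abs_le_abs_add_abs_of_mul_eq {x y z a b c : ℝ} (hc : 0 < c) (ha : 0 ≤ a) (hb : 0 ≤ b)
    (hac : a ≤ c) (hbc : b ≤ c) (h : c * x = a * y + b * z) : |x| ≤ |y| + |z| := by
  rw [← mul_le_mul_iff_right₀ hc]
  calc c * |x| = |a * y + b * z| := by rw [← h, abs_mul, abs_of_pos hc]
    _ ≤ a * |y| + b * |z| := by
      simpa [abs_mul, abs_of_nonneg ha, abs_of_nonneg hb] using abs_add_le (a * y) (b * z)
    _ ≤ c * (|y| + |z|) := by nlinarith [abs_nonneg y, abs_nonneg z]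

/-- The conditions of Theorem 1 for the pair `(α, β)`, with the series made absolutely convergent
so that they survive raising `β`. -/
def JacobiPSD {m : ℕ} (α β : ℝ) (C : ℝ → Matrix (Fin m) (Fin m) ℝ) : Prop :=
  (∀ n, PSD (Hmat α β C n)) ∧
    ∀ i j, Summable fun n : ℕ => ((n : ℝ) + 1) ^ (α + 1) * |Hmat α β C (n + 1) i j|

section JacobiPSD

variable {m : ℕ} {α : ℝ} {C : ℝ → Matrix (Fin m) (Fin m) ℝ}

lemma JacobiPSD.of_seriesConv {β : ℝ} (hsym : ∀ θ ∈ Set.Icc (0 : ℝ) Real.pi, (C θ)ᵀ = C θ)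
    (hpsd : ∀ n, PSD (Hmat α β C n))
    (hconv : ∀ i j, SeriesConv fun n => ((n : ℝ) + 1) ^ (α + 1) * Hmat α β C (n + 1) i j) :
    JacobiPSD α β C := by
  have hw : ∀ n : ℕ, 0 ≤ ((n : ℝ) + 1) ^ (α + 1) := fun n => by positivity
  have hdiag (i : Fin m) :
      Summable fun n : ℕ => ((n : ℝ) + 1) ^ (α + 1) * Hmat α β C (n + 1) i i := by
    obtain ⟨L, hL⟩ := hconv i i
    exact ((hasSum_iff_tendsto_nat_of_nonneg
      (fun n => mul_nonneg (hw n) ((hpsd (n + 1)).diag_nonneg i)) L).2 hL).summable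
  refine ⟨hpsd, fun i j => ?_⟩
  refine (((hdiag i).add (hdiag j)).mul_left (1 / 2)).of_nonneg_of_le (fun n => by positivity)
    fun n => ?_
  calc ((n : ℝ) + 1) ^ (α + 1) * |Hmat α β C (n + 1) i j|
      ≤ ((n : ℝ) + 1) ^ (α + 1) * ((Hmat α β C (n + 1) i i + Hmat α β C (n + 1) j j) / 2) :=
        mul_le_mul_of_nonneg_left ((hpsd (n + 1)).abs_apply_le (Hmat_transpose α β hsym (n + 1)) i j) (hw n)
    _ = 1 / 2 * (((n : ℝ) + 1) ^ (α + 1) * Hmat α β C (n + 1) i i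
          + ((n : ℝ) + 1) ^ (α + 1) * Hmat α β C (n + 1) j j) := by ring

lemma JacobiPSD.succ_beta {β : ℝ} (hα : 0 ≤ 2 * α + 1) (hβ : 0 ≤ 2 * β + 1)
    (hcont : ∀ i j, ContinuousOn (fun θ => C θ i j) (Set.Icc 0 Real.pi))
    (h : JacobiPSD α β C) : JacobiPSD α (β + 1) C := by
  obtain ⟨hpsd, hsum⟩ := h
  have hrec := Hmat_succ_beta α β hα hβ C hcont
  have hn (n : ℕ) : (0 : ℝ) ≤ n := n.cast_nonneg
  have hD (n : ℕ) : (0 : ℝ) < 2 * n + α + β + 2 := by linarith [hn n]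
  have hβn (n : ℕ) : (0 : ℝ) ≤ n + β + 1 := by linarith [hn n]
  refine ⟨fun n => PSD.of_smul_eq_add (hD n) (hβn n) (by positivity) (hpsd n) (hpsd (n + 1))
    (hrec n), fun i j => ?_⟩
  have habs (n : ℕ) :
      |Hmat α (β + 1) C n i j| ≤ |Hmat α β C n i j| + |Hmat α β C (n + 1) i j| := by
    refine abs_le_abs_add_abs_of_mul_eq (hD n) (hβn n) (by positivity : (0 : ℝ) ≤ n + 1)
      (by linarith [hn n]) (by linarith [hn n]) ?_
    simpa using congrFun (congrFun (hrec n) i) j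
  have hshift : Summable fun n : ℕ => ((n : ℝ) + 2) ^ (α + 1) * |Hmat α β C (n + 2) i j| :=
    ((summable_nat_add_iff 1).2 (hsum i j)).congr fun n => by push_cast; ring_nf
  refine ((hsum i j).add hshift).of_nonneg_of_le (fun n => by positivity) fun n => ?_
  have hmono : ((n : ℝ) + 1) ^ (α + 1) ≤ ((n : ℝ) + 2) ^ (α + 1) :=
    Real.rpow_le_rpow (by positivity) (by linarith) (by linarith)
  calc ((n : ℝ) + 1) ^ (α + 1) * |Hmat α (β + 1) C (n + 1) i j|
      ≤ ((n : ℝ) + 1) ^ (α + 1) * (|Hmat α β C (n + 1) i j| + |Hmat α β C (n + 2) i j|) :=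
        mul_le_mul_of_nonneg_left (habs (n + 1)) (by positivity)
    _ ≤ ((n : ℝ) + 1) ^ (α + 1) * |Hmat α β C (n + 1) i j|
          + ((n : ℝ) + 2) ^ (α + 1) * |Hmat α β C (n + 2) i j| := by
        nlinarith [abs_nonneg (Hmat α β C (n + 2) i j)]

lemma JacobiPSD.natCast_beta (hα : 0 ≤ 2 * α + 1)
    (hcont : ∀ i j, ContinuousOn (fun θ => C θ i j) (Set.Icc 0 Real.pi))
    (h : JacobiPSD α 0 C) (b : ℕ) : JacobiPSD α b C := by
  induction b with
  | zero => simpa using h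
  | succ b ih => exact_mod_cast ih.succ_beta hα (by positivity) hcont

lemma JacobiPSD.seriesConv {β : ℝ} (h : JacobiPSD α β C) (i j : Fin m) :
    SeriesConv fun n => ((n : ℝ) + 1) ^ (α + 1) * Hmat α β C (n + 1) i j := by
  have hsum : Summable fun n : ℕ => ((n : ℝ) + 1) ^ (α + 1) * Hmat α β C (n + 1) i j := by
    refine .of_abs ((h.2 i j).congr fun n => ?_)
    rw [abs_mul, abs_of_nonneg (by positivity : (0 : ℝ) ≤ ((n : ℝ) + 1) ^ (α + 1))]
  exact ⟨_, hsum.hasSum.tendsto_sum_nat⟩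

end JacobiPSD

theorem stmt8_general (m : ℕ) (d : ℕ) (hd : 4 ≤ d) (hde : Even d)
    (C : ℝ → Matrix (Fin m) (Fin m) ℝ)
    (hsym : ∀ θ ∈ Set.Icc (0:ℝ) Real.pi, (C θ)ᵀ = C θ)
    (hcont : ∀ i j, ContinuousOn (fun θ => C θ i j) (Set.Icc 0 Real.pi))
    (hyp : (∀ n, PSD (Hmat (((d : ℝ) - 2) / 2) 0 C n)) ∧
      (∀ i j, SeriesConv fun n =>
        ((n : ℝ) + 1) ^ ((((d : ℝ) - 2) / 2) + 1) *
          Hmat (((d : ℝ) - 2) / 2) 0 C (n + 1) i j)) :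
    ((∀ n, PSD (Hmat (((d : ℝ) - 2) / 2) (((d : ℝ) - 2) / 2) C n)) ∧
      (∀ i j, SeriesConv fun n =>
        ((n : ℝ) + 1) ^ ((((d : ℝ) - 2) / 2) + 1) *
          Hmat (((d : ℝ) - 2) / 2) (((d : ℝ) - 2) / 2) C (n + 1) i j))
    ∧
    ((8 ≤ d ∧ (∃ k : ℕ, d = 4 * k)) →
      ((∀ n, PSD (Hmat (((d : ℝ) - 2) / 2) 1 C n)) ∧
        (∀ i j, SeriesConv fun n =>
          ((n : ℝ) + 1) ^ ((((d : ℝ) - 2) / 2) + 1) *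
            Hmat (((d : ℝ) - 2) / 2) 1 C (n + 1) i j))) := by
  have hα : 0 ≤ 2 * (((d : ℝ) - 2) / 2) + 1 := by
    have : (4 : ℝ) ≤ d := by exact_mod_cast hd
    linarith
  have hβ0 : JacobiPSD (((d : ℝ) - 2) / 2) 0 C := .of_seriesConv hsym hyp.1 hyp.2
  have hβ1 : JacobiPSD (((d : ℝ) - 2) / 2) 1 C := by
    have h := hβ0.succ_beta hα (by norm_num) hcont
    rwa [zero_add] at h
  obtain ⟨e, rfl⟩ := hde
  have hα_eq : ((e - 1 : ℕ) : ℝ) = (((e + e : ℕ) : ℝ) - 2) / 2 := by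
    push_cast [Nat.cast_sub (by omega : 1 ≤ e)]
    ring
  have hβα : JacobiPSD ((((e + e : ℕ) : ℝ) - 2) / 2) ((((e + e : ℕ) : ℝ) - 2) / 2) C := by
    have h := hβ0.natCast_beta hα hcont (e - 1)
    rwa [hα_eq] at h
  exact ⟨⟨hβα.1, hβα.seriesConv⟩, fun _ => ⟨hβ1.1, hβ1.seriesConv⟩⟩

/-- Theorem 2(ii): a covariance structure on the complex projective space P^d(ℂ)
transfers to the sphere S^d and (for d ∈ {8,12,...}) to the quaternionic
projective space P^d(ℍ), stated via the Theorem-1 characterization. -/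
theorem stmt8 (m : ℕ) (hm : 1 ≤ m) (d : ℕ) (hd : 4 ≤ d) (hde : Even d)
    (C : ℝ → Matrix (Fin m) (Fin m) ℝ)
    (hsym : ∀ θ ∈ Set.Icc (0:ℝ) Real.pi, (C θ)ᵀ = C θ)
    (hcont : ∀ i j, ContinuousOn (fun θ => C θ i j) (Set.Icc 0 Real.pi))
    (hyp : (∀ n, PSD (Hmat (((d : ℝ) - 2) / 2) 0 C n)) ∧
      (∀ i j, SeriesConv fun n =>
        ((n : ℝ) + 1) ^ ((((d : ℝ) - 2) / 2) + 1) *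
          Hmat (((d : ℝ) - 2) / 2) 0 C (n + 1) i j)) :
    ((∀ n, PSD (Hmat (((d : ℝ) - 2) / 2) (((d : ℝ) - 2) / 2) C n)) ∧
      (∀ i j, SeriesConv fun n =>
        ((n : ℝ) + 1) ^ ((((d : ℝ) - 2) / 2) + 1) *
          Hmat (((d : ℝ) - 2) / 2) (((d : ℝ) - 2) / 2) C (n + 1) i j))
    ∧
    ((8 ≤ d ∧ (∃ k : ℕ, d = 4 * k)) →
      ((∀ n, PSD (Hmat (((d : ℝ) - 2) / 2) 1 C n)) ∧
        (∀ i j, SeriesConv fun n =>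
          ((n : ℝ) + 1) ^ ((((d : ℝ) - 2) / 2) + 1) *
            Hmat (((d : ℝ) - 2) / 2) 1 C (n + 1) i j))) :=
  stmt8_general m d hd hde C hsym hcont hyp
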